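/- arXiv:2307.06190 — 4 statements merged into one kernel-verified Lean document; each statement's English description precedes it below -/
import Mathlib

section
/- Let Ψ : ℝ^d → ℝ^d be continuous and positively homogeneous of degree one, and suppose Ψ^k(w) → 0 as k → ∞ for all w ∈ ℝ^d. Then there exist γ ∈ (0,1), a constant C < ∞, and a continuous, positively homogeneous of degree one function V : ℝ^d → ℝ₊ such that ‖w‖ ≤ V(w) ≤ C‖w‖ and V(Ψ(w)) ≤ γ V(w) for all w ∈ ℝ^d. -/
/-!
Homogeneity reduces everything to the unit sphere. Since every orbit tends to `0`, each unit
vector has an iterate of norm `< 1/2`; these conditions are open, so by compactness of the sphere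
one bound `K` on the halving time works for all `w`. Together with the linear growth bound
`‖Ψ w‖ ≤ M ‖w‖` this gives `‖Ψ^n w‖ ≤ M^K 2^(-⌊n/K⌋) ‖w‖`, hence a fixed `N` with
`‖Ψ^N w‖ ≤ ‖w‖ / 2` for all `w`. With `β = 2^(1/N)` the finite weighted orbit sum
`V w = ∑_{j<N} β^j ‖Ψ^j w‖` then telescopes to `β V(Ψ w) = V w - ‖w‖ + β^N ‖Ψ^N w‖ ≤ V w`.
-/

open Filter Topology Finset

section Iterates

variable {E : Type*} [SeminormedAddGroup E] {f : E → E}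

theorem norm_iterate_le_pow_mul {M : ℝ} (hM : 0 ≤ M) (hfM : ∀ w, ‖f w‖ ≤ M * ‖w‖) (n : ℕ)
    (w : E) : ‖f^[n] w‖ ≤ M ^ n * ‖w‖ := by
  induction n with
  | zero => simp
  | succ n ih =>
    rw [Function.iterate_succ_apply', pow_succ', mul_assoc]
    exact (hfM _).trans (mul_le_mul_of_nonneg_left ih hM)

theorem norm_iterate_le_of_halving {K : ℕ} {B : ℝ} (hB₀ : 0 ≤ B)
    (hB : ∀ n < K, ∀ w, ‖f^[n] w‖ ≤ B * ‖w‖)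
    (hhalf : ∀ w, ∃ j, 0 < j ∧ j ≤ K ∧ ‖f^[j] w‖ ≤ 2⁻¹ * ‖w‖) (n : ℕ) (w : E) :
    ‖f^[n] w‖ ≤ B * 2⁻¹ ^ (n / K) * ‖w‖ := by
  induction n using Nat.strong_induction_on generalizing w with
  | _ n ih =>
  rcases lt_or_ge n K with hn | hn
  · simpa [Nat.div_eq_of_lt hn] using hB n hn w
  obtain ⟨j, hj, hjK, hjw⟩ := hhalf w
  have hdiv : n / K ≤ (n - j) / K + 1 := by
    rw [← Nat.add_div_right _ (hj.trans_le hjK)]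
    exact Nat.div_le_div_right (by omega)
  calc ‖f^[n] w‖ = ‖f^[n - j] (f^[j] w)‖ := by
        rw [← Function.iterate_add_apply, Nat.sub_add_cancel (hjK.trans hn)]
    _ ≤ B * 2⁻¹ ^ ((n - j) / K) * ‖f^[j] w‖ := ih _ (by omega) _
    _ ≤ B * 2⁻¹ ^ ((n - j) / K) * (2⁻¹ * ‖w‖) := by gcongr
    _ = B * 2⁻¹ ^ ((n - j) / K + 1) * ‖w‖ := by ring
    _ ≤ B * 2⁻¹ ^ (n / K) * ‖w‖ := by
        gcongr B * ?_ * _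
        exact pow_le_pow_of_le_one (by norm_num) (by norm_num) hdiv

end Iterates

section Homogeneous

variable {E : Type*} [AddCommGroup E] [Module ℝ E] {f : E → E}

theorem map_zero_of_posHomogeneous (hf : ∀ c : ℝ, 0 ≤ c → ∀ w, f (c • w) = c • f w) :
    f 0 = 0 := by
  simpa using hf 0 le_rfl 0

theorem iterate_smul_of_posHomogeneous (hf : ∀ c : ℝ, 0 ≤ c → ∀ w, f (c • w) = c • f w)
    (n : ℕ) : ∀ c : ℝ, 0 ≤ c → ∀ w, f^[n] (c • w) = c • f^[n] w := by
  induction n with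
  | zero => simp
  | succ n ih =>
    intro c hc w
    rw [Function.iterate_succ_apply, Function.iterate_succ_apply, hf c hc, ih c hc]

end Homogeneous

section PositivelyHomogeneous

variable {E : Type*} [NormedAddCommGroup E] [NormedSpace ℝ E] {f : E → E}

theorem norm_apply_eq_norm_mul_norm_apply_inv_norm_smul
    (hf : ∀ c : ℝ, 0 ≤ c → ∀ w, f (c • w) = c • f w) (w : E) : ‖f w‖ = ‖w‖ * ‖f (‖w‖⁻¹ • w)‖ := by
  rcases eq_or_ne w 0 with rfl | hw
  · simp [map_zero_of_posHomogeneous hf]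
  · conv_lhs => rw [← smul_inv_smul₀ (norm_ne_zero_iff.mpr hw) w]
    rw [hf _ (norm_nonneg w), norm_smul, norm_norm]

theorem exists_norm_le_mul_norm_of_posHomogeneous (hc : ContinuousAt f 0)
    (hf : ∀ c : ℝ, 0 ≤ c → ∀ w, f (c • w) = c • f w) :
    ∃ M : ℝ, 1 ≤ M ∧ ∀ w, ‖f w‖ ≤ M * ‖w‖ := by
  have hsmall : ∀ᶠ v in 𝓝 (0 : E), ‖f v‖ < 1 := by
    have := hc.tendsto.norm
    rw [map_zero_of_posHomogeneous hf, norm_zero] at this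
    exact this.eventually_lt_const one_pos
  obtain ⟨δ, hδ, hδf⟩ := Metric.eventually_nhds_iff.mp hsmall
  have hunit : ∀ v : E, ‖v‖ ≤ 1 → ‖f v‖ ≤ 2 / δ := by
    intro v hv
    have hlt : ‖f ((δ / 2) • v)‖ < 1 := hδf (by
      rw [dist_zero_right, norm_smul, Real.norm_of_nonneg (by positivity)]
      nlinarith [norm_nonneg v])
    rw [hf _ (by positivity), norm_smul, Real.norm_of_nonneg (by positivity)] at hlt
    rw [le_div_iff₀ hδ]
    linarith
  refine ⟨max 1 (2 / δ), le_max_left _ _, fun w => ?_⟩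
  rw [norm_apply_eq_norm_mul_norm_apply_inv_norm_smul hf w, mul_comm]
  refine mul_le_mul_of_nonneg_right ((hunit _ ?_).trans (le_max_right _ _)) (norm_nonneg w)
  rw [norm_smul, norm_inv, norm_norm]
  exact inv_mul_le_one_of_le₀ le_rfl (norm_nonneg w)

theorem exists_uniform_halving_time [ProperSpace E] (hc : Continuous f)
    (hf : ∀ c : ℝ, 0 ≤ c → ∀ w, f (c • w) = c • f w)
    (hstable : ∀ w, Tendsto (fun k => f^[k] w) atTop (𝓝 0)) :
    ∃ K : ℕ, 0 < K ∧ ∀ w, ∃ j, 0 < j ∧ j ≤ K ∧ ‖f^[j] w‖ ≤ 2⁻¹ * ‖w‖ := by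
  have hcover : Metric.sphere (0 : E) 1 ⊆ ⋃ k : ℕ, {v | ‖f^[k + 1] v‖ < 2⁻¹} := by
    intro v _
    have hv : ∀ᶠ k in atTop, ‖f^[k + 1] v‖ < 2⁻¹ := by
      have := ((hstable v).comp (tendsto_add_atTop_nat 1)).norm
      rw [norm_zero] at this
      exact this.eventually_lt_const (by norm_num)
    exact Set.mem_iUnion.mpr hv.exists
  obtain ⟨s, hs⟩ := (isCompact_sphere (0 : E) 1).elim_finite_subcover _
    (fun k => isOpen_lt (hc.iterate _).norm continuous_const) hcover
  refine ⟨s.sup id + 1, Nat.succ_pos _, fun w => ?_⟩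
  rcases eq_or_ne w 0 with rfl | hw
  · refine ⟨s.sup id + 1, Nat.succ_pos _, le_rfl, ?_⟩
    simp [map_zero_of_posHomogeneous (f := f^[_]) (iterate_smul_of_posHomogeneous hf _)]
  · have hu : ‖w‖⁻¹ • w ∈ Metric.sphere (0 : E) 1 := by
      simpa using norm_smul_inv_norm (𝕜 := ℝ) hw
    obtain ⟨k, hks, hk⟩ := Set.mem_iUnion₂.mp (hs hu)
    refine ⟨k + 1, Nat.succ_pos _, Nat.succ_le_succ (Finset.le_sup (f := id) hks), ?_⟩
    rw [norm_apply_eq_norm_mul_norm_apply_inv_norm_smul (iterate_smul_of_posHomogeneous hf _),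
      mul_comm]
    exact mul_le_mul_of_nonneg_right (le_of_lt hk) (norm_nonneg w)

theorem exists_iterate_norm_le_half [ProperSpace E] (hc : Continuous f)
    (hf : ∀ c : ℝ, 0 ≤ c → ∀ w, f (c • w) = c • f w)
    (hstable : ∀ w, Tendsto (fun k => f^[k] w) atTop (𝓝 0)) :
    ∃ N : ℕ, 0 < N ∧ ∀ w, ‖f^[N] w‖ ≤ 2⁻¹ * ‖w‖ := by
  obtain ⟨M, hM, hfM⟩ := exists_norm_le_mul_norm_of_posHomogeneous hc.continuousAt hf
  obtain ⟨K, hK, hhalf⟩ := exists_uniform_halving_time hc hf hstable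
  have hMK : 0 < M ^ K := by positivity
  have hdecay := norm_iterate_le_of_halving hMK.le (fun n hn w =>
    (norm_iterate_le_pow_mul (by positivity) hfM n w).trans (by gcongr)) hhalf
  obtain ⟨m, hm⟩ := exists_pow_lt_of_lt_one (inv_pos.mpr hMK) (by norm_num : (2⁻¹ : ℝ) < 1)
  refine ⟨K * (m + 1), by positivity, fun w => ?_⟩
  calc ‖f^[K * (m + 1)] w‖ ≤ M ^ K * 2⁻¹ ^ (K * (m + 1) / K) * ‖w‖ := hdecay _ w
    _ = 2⁻¹ * (M ^ K * 2⁻¹ ^ m) * ‖w‖ := by rw [Nat.mul_div_cancel_left _ hK]; ring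
    _ ≤ 2⁻¹ * (M ^ K * (M ^ K)⁻¹) * ‖w‖ := by gcongr
    _ = 2⁻¹ * ‖w‖ := by rw [mul_inv_cancel₀ hMK.ne', mul_one]

end PositivelyHomogeneous

section WeightedOrbitNorm

variable {E : Type*} [SeminormedAddCommGroup E] {f : E → E} {β : ℝ} {N : ℕ}

noncomputable def weightedOrbitNorm (f : E → E) (β : ℝ) (N : ℕ) (w : E) : ℝ :=
  ∑ j ∈ range N, β ^ j * ‖f^[j] w‖

theorem continuous_weightedOrbitNorm (hf : Continuous f) :
    Continuous (weightedOrbitNorm f β N) :=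
  continuous_finsetSum _ fun j _ => continuous_const.mul (hf.iterate j).norm

theorem weightedOrbitNorm_smul [NormedSpace ℝ E]
    (hf : ∀ c : ℝ, 0 ≤ c → ∀ w, f (c • w) = c • f w) {c : ℝ} (hc : 0 ≤ c) (w : E) :
    weightedOrbitNorm f β N (c • w) = c * weightedOrbitNorm f β N w := by
  simp only [weightedOrbitNorm, mul_sum, iterate_smul_of_posHomogeneous hf _ c hc, norm_smul,
    Real.norm_of_nonneg hc, mul_left_comm]

theorem weightedOrbitNorm_nonneg (hβ : 0 ≤ β) (w : E) : 0 ≤ weightedOrbitNorm f β N w :=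
  sum_nonneg fun j _ => by positivity

theorem norm_le_weightedOrbitNorm (hβ : 0 ≤ β) (hN : 0 < N) (w : E) :
    ‖w‖ ≤ weightedOrbitNorm f β N w := by
  simpa [weightedOrbitNorm] using single_le_sum (f := fun j => β ^ j * ‖f^[j] w‖)
    (fun j _ => by positivity) (mem_range.mpr hN)

theorem weightedOrbitNorm_le {M : ℝ} (hβ : 0 ≤ β) (hM : 0 ≤ M)
    (hfM : ∀ w, ‖f w‖ ≤ M * ‖w‖) (w : E) :
    weightedOrbitNorm f β N w ≤ (∑ j ∈ range N, β ^ j * M ^ j) * ‖w‖ := by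
  rw [weightedOrbitNorm, sum_mul]
  refine sum_le_sum fun j _ => ?_
  rw [mul_assoc]
  exact mul_le_mul_of_nonneg_left (norm_iterate_le_pow_mul hM hfM j w) (by positivity)

theorem mul_weightedOrbitNorm_apply_add_norm (w : E) :
    β * weightedOrbitNorm f β N (f w) + ‖w‖ =
      weightedOrbitNorm f β N w + β ^ N * ‖f^[N] w‖ := by
  have hshift : β * weightedOrbitNorm f β N (f w) =
      ∑ j ∈ range N, β ^ (j + 1) * ‖f^[j + 1] w‖ := by
    simp only [weightedOrbitNorm, mul_sum, pow_succ', Function.iterate_succ_apply, mul_assoc]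
  rw [hshift, weightedOrbitNorm, ← sum_range_succ, sum_range_succ' (fun j => β ^ j * ‖f^[j] w‖)]
  simp

theorem weightedOrbitNorm_apply_le (hβ : 0 < β) {w : E} (hw : β ^ N * ‖f^[N] w‖ ≤ ‖w‖) :
    weightedOrbitNorm f β N (f w) ≤ β⁻¹ * weightedOrbitNorm f β N w := by
  rw [le_inv_mul_iff₀ hβ]
  linarith [mul_weightedOrbitNorm_apply_add_norm (f := f) (β := β) (N := N) w]

end WeightedOrbitNorm

/-- Lyapunov lemma: a continuous, positively homogeneous (degree one) map
`Ψ : ℝ^d → ℝ^d` whose iterates converge to zero from every initial value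
admits a continuous, positively homogeneous Lyapunov function `V` with
`‖w‖ ≤ V(w) ≤ C‖w‖` and `V(Ψ(w)) ≤ γ V(w)` for some `γ ∈ (0,1)`, `C < ∞`. -/
theorem exists_lyapunov_function {d : ℕ}
    (Ψ : EuclideanSpace ℝ (Fin d) → EuclideanSpace ℝ (Fin d))
    (hΨcont : Continuous Ψ)
    (hΨhom : ∀ c : ℝ, 0 ≤ c → ∀ w, Ψ (c • w) = c • Ψ w)
    (hstable : ∀ w : EuclideanSpace ℝ (Fin d),
      Filter.Tendsto (fun k => Ψ^[k] w) Filter.atTop (nhds 0)) :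
    ∃ (γ : ℝ) (C : ℝ) (V : EuclideanSpace ℝ (Fin d) → ℝ),
      0 < γ ∧ γ < 1 ∧
      Continuous V ∧
      (∀ c : ℝ, 0 ≤ c → ∀ w, V (c • w) = c * V w) ∧
      (∀ w, 0 ≤ V w) ∧
      (∀ w, ‖w‖ ≤ V w) ∧
      (∀ w, V w ≤ C * ‖w‖) ∧
      (∀ w, V (Ψ w) ≤ γ * V w) := by
  obtain ⟨M, hM, hΨM⟩ := exists_norm_le_mul_norm_of_posHomogeneous hΨcont.continuousAt hΨhom
  obtain ⟨N, hN, hhalf⟩ := exists_iterate_norm_le_half hΨcont hΨhom hstable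
  -- `β ^ N = 2` exactly compensates the halving after `N` steps
  set β : ℝ := 2 ^ ((N : ℝ)⁻¹)
  have hβ : 1 < β := Real.one_lt_rpow one_lt_two (by positivity)
  have hβN : β ^ N = 2 := Real.rpow_inv_natCast_pow zero_le_two hN.ne'
  refine ⟨β⁻¹, ∑ j ∈ range N, β ^ j * M ^ j, weightedOrbitNorm Ψ β N,
    by positivity, inv_lt_one_of_one_lt₀ hβ, continuous_weightedOrbitNorm hΨcont,
    fun c hc w => weightedOrbitNorm_smul hΨhom hc w,
    weightedOrbitNorm_nonneg (by positivity), norm_le_weightedOrbitNorm (by positivity) hN,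
    weightedOrbitNorm_le (by positivity) (zero_le_one.trans hM) hΨM, fun w => ?_⟩
  refine weightedOrbitNorm_apply_le (by positivity) ?_
  rw [hβN]
  linarith [hhalf w]
end

section
/- Given γ ∈ (0,1), M ∈ ℕ, and a continuous positively homogeneous degree-one map Ψ : ℝ^d → ℝ^d with ‖Ψ^M(w)‖ < γ^M ‖w‖ for all w ≠ 0, the function V(w) := Σ_{k=0}^{M-1} γ^{-k} ‖Ψ^k(w)‖ satisfies V(w) ≥ ‖w‖ and V(Ψ(w)) < γ V(w) for all w ≠ 0. -/
open Finset

noncomputable def lyapunovSum {E : Type*} [Norm E] (γ : ℝ) (M : ℕ) (Ψ : E → E) (w : E) : ℝ :=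
  ∑ k ∈ range M, (γ ^ k)⁻¹ * ‖Ψ^[k] w‖

theorem norm_le_lyapunovSum {E : Type*} [SeminormedAddGroup E] {γ : ℝ} (hγ : 0 ≤ γ) {M : ℕ}
    (hM : 0 < M) (Ψ : E → E) (w : E) : ‖w‖ ≤ lyapunovSum γ M Ψ w := by
  calc ‖w‖ = (γ ^ 0)⁻¹ * ‖Ψ^[0] w‖ := by simp
    _ ≤ lyapunovSum γ M Ψ w :=
      single_le_sum (f := fun k => (γ ^ k)⁻¹ * ‖Ψ^[k] w‖) (fun k _ => by positivity)
        (mem_range.mpr hM)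

/-- Shifting the orbit by one step trades the `k = 0` term for a new `k = M` term. -/
theorem lyapunovSum_apply_add {E : Type*} [Norm E] {γ : ℝ} (hγ : γ ≠ 0) (M : ℕ) (Ψ : E → E)
    (w : E) :
    lyapunovSum γ M Ψ (Ψ w) + γ * ‖w‖ =
      γ * lyapunovSum γ M Ψ w + γ * ((γ ^ M)⁻¹ * ‖Ψ^[M] w‖) := by
  rw [lyapunovSum, lyapunovSum, ← mul_add, ← sum_range_succ (fun k => (γ ^ k)⁻¹ * ‖Ψ^[k] w‖),
    sum_range_succ', mul_add, mul_sum]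
  congr 1
  · refine sum_congr rfl fun k _ => ?_
    rw [pow_succ, Function.iterate_succ_apply]
    field_simp
  · simp

theorem lyapunovSum_apply_lt {E : Type*} [Norm E] {γ : ℝ} (hγ : 0 < γ) {M : ℕ} (Ψ : E → E)
    {w : E} (hw : ‖Ψ^[M] w‖ < γ ^ M * ‖w‖) :
    lyapunovSum γ M Ψ (Ψ w) < γ * lyapunovSum γ M Ψ w := by
  have hstep : (γ ^ M)⁻¹ * ‖Ψ^[M] w‖ < ‖w‖ := by
    rwa [inv_mul_lt_iff₀ (pow_pos hγ M)]
  have := lyapunovSum_apply_add hγ.ne' M Ψ w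
  linarith [mul_lt_mul_of_pos_left hstep hγ]

theorem lyapunov_construction_general {d : ℕ}
    (γ : ℝ) (hγ0 : 0 < γ) (M : ℕ)
    (Ψ : EuclideanSpace ℝ (Fin d) → EuclideanSpace ℝ (Fin d))
    (hM : ∀ w : EuclideanSpace ℝ (Fin d), w ≠ 0 → ‖Ψ^[M] w‖ < γ ^ M * ‖w‖) :
    ∀ w : EuclideanSpace ℝ (Fin d), w ≠ 0 →
      ‖w‖ ≤ (∑ k ∈ Finset.range M, (γ ^ k)⁻¹ * ‖Ψ^[k] w‖) ∧
      (∑ k ∈ Finset.range M, (γ ^ k)⁻¹ * ‖Ψ^[k] (Ψ w)‖) <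
        γ * (∑ k ∈ Finset.range M, (γ ^ k)⁻¹ * ‖Ψ^[k] w‖) := by
  intro w hw
  have hMpos : 0 < M := Nat.pos_of_ne_zero fun h => by simpa [h] using hM w hw
  exact ⟨norm_le_lyapunovSum hγ0.le hMpos Ψ w, lyapunovSum_apply_lt hγ0 Ψ (hM w hw)⟩

/-- The explicit Lyapunov construction: if `‖Ψ^M(w)‖ < γ^M ‖w‖` for all `w ≠ 0`,
then `V(w) := Σ_{k=0}^{M-1} γ^{-k} ‖Ψ^k(w)‖` satisfies `V(w) ≥ ‖w‖` and
`V(Ψ(w)) < γ V(w)` for all `w ≠ 0`. -/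
theorem lyapunov_construction {d : ℕ}
    (γ : ℝ) (hγ0 : 0 < γ) (hγ1 : γ < 1) (M : ℕ)
    (Ψ : EuclideanSpace ℝ (Fin d) → EuclideanSpace ℝ (Fin d))
    (hΨcont : Continuous Ψ)
    (hΨhom : ∀ c : ℝ, 0 ≤ c → ∀ w, Ψ (c • w) = c • Ψ w)
    (hM : ∀ w : EuclideanSpace ℝ (Fin d), w ≠ 0 → ‖Ψ^[M] w‖ < γ ^ M * ‖w‖) :
    ∀ w : EuclideanSpace ℝ (Fin d), w ≠ 0 →
      ‖w‖ ≤ (∑ k ∈ Finset.range M, (γ ^ k)⁻¹ * ‖Ψ^[k] w‖) ∧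
      (∑ k ∈ Finset.range M, (γ ^ k)⁻¹ * ‖Ψ^[k] (Ψ w)‖) <
        γ * (∑ k ∈ Finset.range M, (γ ^ k)⁻¹ * ‖Ψ^[k] w‖) :=
  lyapunov_construction_general γ hγ0 M Ψ hM
end

section
/- Let I be a finite index set, {𝒲_i}_{i∈I} a partition of ℝ^d, {A[i]}_{i∈I} d×d matrices, and 𝒥 ⊆ I×I containing all pairs (i,j) for which there exists w ∈ 𝒲_i with A[i]w ∈ 𝒲_j. Suppose there exist γ ∈ (0,1), functions ⟪·⟫_i : ℝ^d → ℝ and constants c_i > 0 (i ∈ I) such that: (a) c_i‖w‖ ≤ ⟪w⟫_i for all w ∈ 𝒲_i; and (b) ⟪A[i]w⟫_j ≤ γ ⟪w⟫_i for all w ∈ 𝒲_i with A[i]w ∈ 𝒲_j, for all (i,j) ∈ 𝒥. Then the piecewise system w_t = A[σ(w_{t-1})]w_{t-1}, where σ(w) = i iff w ∈ 𝒲_i, is globally asymptotically stable: w_t → 0 for every w₀ ∈ ℝ^d. -/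
/-!
Along a trajectory, `V t := ⟪w_t⟫_{σ(w_t)}` is a Lyapunov function: every transition taken is
in `𝒥`, so `V` contracts by `γ` at each step, and `V t ≥ (min_i c_i) ‖w_t‖` with
`min_i c_i > 0` because `I` is finite. Hence `‖w_t‖` decays geometrically.
-/

open Matrix Filter Topology

theorem tendsto_zero_of_geometric_lyapunov {E : Type*} [SeminormedAddCommGroup E]
    {x : ℕ → E} {V : ℕ → ℝ} {c γ : ℝ} (hc : 0 < c) (hγ0 : 0 ≤ γ) (hγ1 : γ < 1)
    (hlower : ∀ t, c * ‖x t‖ ≤ V t) (hstep : ∀ t, V (t + 1) ≤ γ * V t) :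
    Tendsto x atTop (𝓝 0) := by
  have hbound : ∀ t, ‖x t‖ ≤ V 0 / c * γ ^ t := fun t => by
    rw [div_mul_eq_mul_div, le_div_iff₀ hc]
    calc ‖x t‖ * c = c * ‖x t‖ := mul_comm _ _
      _ ≤ V t := hlower t
      _ ≤ γ ^ t * V 0 := le_geom hγ0 t fun k _ => hstep k
      _ = V 0 * γ ^ t := mul_comm _ _
  have hgeom : Tendsto (fun t => V 0 / c * γ ^ t) atTop (𝓝 0) := by
    simpa using (tendsto_pow_atTop_nhds_zero_of_lt_one hγ0 hγ1).const_mul (V 0 / c)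
  exact squeeze_zero_norm hbound hgeom

/-- Relaxed-Lyapunov stability of a piecewise linear system: if the partition
cells `𝒲_i` carry functions `⟪·⟫_i` satisfying the conic lower bound
`c_i‖w‖ ≤ ⟪w⟫_i` on `𝒲_i` and the transition contraction
`⟪A[i]w⟫_j ≤ γ⟪w⟫_i` along admitted transitions, with `γ ∈ (0,1)`, then every
trajectory of `w_t = A[σ(w_{t-1})]w_{t-1}` converges to zero. -/
theorem piecewise_system_tendsto_zero {d : ℕ} {I : Type*} [Fintype I]
    (W : I → Set (Fin d → ℝ))
    (hpart : ∀ w : Fin d → ℝ, ∃! i : I, w ∈ W i)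
    (A : I → Matrix (Fin d) (Fin d) ℝ)
    (𝒥 : Set (I × I))
    (h𝒥 : ∀ i j : I, (∃ w ∈ W i, A i *ᵥ w ∈ W j) → (i, j) ∈ 𝒥)
    (γ : ℝ) (hγ0 : 0 < γ) (hγ1 : γ < 1)
    (N : I → (Fin d → ℝ) → ℝ) (c : I → ℝ) (hc : ∀ i, 0 < c i)
    (hlower : ∀ i : I, ∀ w ∈ W i, c i * ‖w‖ ≤ N i w)
    (hcontr : ∀ i j : I, (i, j) ∈ 𝒥 →
      ∀ w ∈ W i, A i *ᵥ w ∈ W j → N j (A i *ᵥ w) ≤ γ * N i w) :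
    ∀ w : ℕ → Fin d → ℝ,
      (∀ t : ℕ, ∀ i : I, w t ∈ W i → w (t + 1) = A i *ᵥ w t) →
      Filter.Tendsto w Filter.atTop (nhds 0) := by
  intro w hw
  choose σ hσ using fun t => (hpart (w t)).exists
  have hnext : ∀ t, w (t + 1) = A (σ t) *ᵥ w t := fun t => hw t _ (hσ t)
  have : Nonempty I := ⟨σ 0⟩
  obtain ⟨i₀, hmin⟩ := Finite.exists_min c
  refine tendsto_zero_of_geometric_lyapunov (V := fun t => N (σ t) (w t)) (hc i₀) hγ0.le hγ1
    (fun t => ?_) (fun t => ?_)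
  · exact (mul_le_mul_of_nonneg_right (hmin _) (norm_nonneg _)).trans (hlower _ _ (hσ t))
  · have hmem : A (σ t) *ᵥ w t ∈ W (σ (t + 1)) := hnext t ▸ hσ (t + 1)
    rw [hnext t]
    exact hcontr _ _ (h𝒥 _ _ ⟨w t, hσ t, hmem⟩) _ (hσ t) hmem
end

section
/- Let Q = [[1, −φ_{yx}ᵀΦ_{xx}^{-1}],[0, I_{p−1}]] and P^{-1} = [[φ̄⁺, 0, 0],[0, φ̄⁻, 0],[φ⁺_{xy}, φ⁻_{xy}, Φ_{xx}]] where φ̄± := φ±_{yy} − φ_{yx}ᵀΦ_{xx}^{-1}φ±_{xy} ≠ 0 and Φ_{xx} is invertible. Then for Φ₀ = [[φ⁺_{yy}, φ⁻_{yy}, φ_{yx}ᵀ],[φ⁺_{xy}, φ⁻_{xy}, Φ_{xx}]], we have Q Φ₀ P = I*_p, where I*_p := [[1,1,0],[0,0,I_{p−1}]] (a p×(p+1) matrix) and P is the inverse of P^{-1}. -/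
open Matrix

variable {n : Type*} [Fintype n] [DecidableEq n]

/-- The `p × (p+1)` contemporaneous coefficient matrix `Φ₀` of a CKSVAR, with
columns indexed by `(y⁺, y⁻, x)`. -/
def cksvarPhi0 (φyyp φyym : ℝ) (φyx φxyp φxym : n → ℝ) (Φxx : Matrix n n ℝ) :
    Matrix (Unit ⊕ n) (Unit ⊕ Unit ⊕ n) ℝ :=
  Matrix.of fun r c =>
    match r, c with
    | Sum.inl _, Sum.inl _ => φyyp
    | Sum.inl _, Sum.inr (Sum.inl _) => φyym
    | Sum.inl _, Sum.inr (Sum.inr j) => φyx j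
    | Sum.inr i, Sum.inl _ => φxyp i
    | Sum.inr i, Sum.inr (Sum.inl _) => φxym i
    | Sum.inr i, Sum.inr (Sum.inr j) => Φxx i j

/-- The matrix `Q = [[1, −φ_yxᵀ Φ_xx⁻¹], [0, I]]`. -/
noncomputable def cksvarQ (φyx : n → ℝ) (Φxx : Matrix n n ℝ) :
    Matrix (Unit ⊕ n) (Unit ⊕ n) ℝ :=
  Matrix.fromBlocks 1 (Matrix.of fun (_ : Unit) j => -(φyx ᵥ* Φxx⁻¹) j) 0 1

/-- The matrix `P⁻¹ = [[φ̄⁺,0,0],[0,φ̄⁻,0],[φ⁺_xy, φ⁻_xy, Φ_xx]]`, where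
`φ̄± = φ±_yy − φ_yxᵀ Φ_xx⁻¹ φ±_xy`. -/
noncomputable def cksvarPinv (φyyp φyym : ℝ) (φyx φxyp φxym : n → ℝ)
    (Φxx : Matrix n n ℝ) : Matrix (Unit ⊕ Unit ⊕ n) (Unit ⊕ Unit ⊕ n) ℝ :=
  Matrix.of fun r c =>
    match r, c with
    | Sum.inl _, Sum.inl _ => φyyp - φyx ⬝ᵥ Φxx⁻¹ *ᵥ φxyp
    | Sum.inr (Sum.inl _), Sum.inr (Sum.inl _) => φyym - φyx ⬝ᵥ Φxx⁻¹ *ᵥ φxym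
    | Sum.inr (Sum.inr i), Sum.inl _ => φxyp i
    | Sum.inr (Sum.inr i), Sum.inr (Sum.inl _) => φxym i
    | Sum.inr (Sum.inr i), Sum.inr (Sum.inr j) => Φxx i j
    | _, _ => 0

/-- The canonical contemporaneous coefficient matrix `I*_p = [[1,1,0],[0,0,I]]`. -/
def cksvarIstar : Matrix (Unit ⊕ n) (Unit ⊕ Unit ⊕ n) ℝ :=
  Matrix.of fun r c =>
    match r, c with
    | Sum.inl _, Sum.inl _ => 1
    | Sum.inl _, Sum.inr (Sum.inl _) => 1
    | Sum.inr i, Sum.inr (Sum.inr j) => if i = j then 1 else 0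
    | _, _ => 0

/-!
Left multiplication by `Q` subtracts `φ_yxᵀ Φ_xx⁻¹` times the lower block rows of `Φ₀` from its
top row: this clears `φ_yxᵀ` and leaves the Schur complements `φ̄±` in its place. The resulting
matrix is also `I*_p P⁻¹`, whose top row is the sum of the first two rows of `P⁻¹`. Since `P⁻¹`
is block lower triangular with determinant `φ̄⁺ φ̄⁻ det Φ_xx`, it is invertible, and
`Q Φ₀ P = I*_p P⁻¹ P = I*_p`.
-/

section

variable (φyyp φyym : ℝ) (φyx φxyp φxym : n → ℝ) (Φxx : Matrix n n ℝ)

theorem cksvarPinv_eq_fromBlocks :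
    cksvarPinv φyyp φyym φyx φxyp φxym Φxx =
      fromBlocks (of fun _ _ => φyyp - φyx ⬝ᵥ Φxx⁻¹ *ᵥ φxyp : Matrix Unit Unit ℝ) 0
        (replicateCol Unit (Sum.elim 0 φxyp))
        (fromBlocks (of fun _ _ => φyym - φyx ⬝ᵥ Φxx⁻¹ *ᵥ φxym : Matrix Unit Unit ℝ) 0
          (replicateCol Unit φxym) Φxx) := by
  ext (_ | _ | i) (_ | _ | j) <;> rfl

theorem det_cksvarPinv :
    (cksvarPinv φyyp φyym φyx φxyp φxym Φxx).det =
      (φyyp - φyx ⬝ᵥ Φxx⁻¹ *ᵥ φxyp) * ((φyym - φyx ⬝ᵥ Φxx⁻¹ *ᵥ φxym) * Φxx.det) := by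
  simp [cksvarPinv_eq_fromBlocks, det_fromBlocks_zero₁₂]

theorem cksvarIstar_mul_cksvarPinv :
    cksvarIstar (n := n) * cksvarPinv φyyp φyym φyx φxyp φxym Φxx =
      cksvarPhi0 (φyyp - φyx ⬝ᵥ Φxx⁻¹ *ᵥ φxyp) (φyym - φyx ⬝ᵥ Φxx⁻¹ *ᵥ φxym) 0 φxyp φxym Φxx := by
  ext (_ | i) (_ | _ | j) <;>
    simp [cksvarIstar, cksvarPinv, cksvarPhi0, mul_apply, Fintype.sum_sum_type]

theorem cksvarQ_mul_cksvarPhi0 (hΦxx : IsUnit Φxx.det) :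
    cksvarQ φyx Φxx * cksvarPhi0 φyyp φyym φyx φxyp φxym Φxx =
      cksvarPhi0 (φyyp - φyx ⬝ᵥ Φxx⁻¹ *ᵥ φxyp) (φyym - φyx ⬝ᵥ Φxx⁻¹ *ᵥ φxym) 0 φxyp φxym Φxx := by
  have hrow : (φyx ᵥ* Φxx⁻¹) ᵥ* Φxx = φyx := by
    rw [vecMul_vecMul, nonsing_inv_mul _ hΦxx, vecMul_one]
  simp only [dotProduct_mulVec]
  ext (_ | i) (_ | _ | j) <;>
    simp [mul_apply, Fintype.sum_sum_type, cksvarQ, cksvarPhi0, ← sub_eq_add_neg, dotProduct,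
      one_apply]
  rw [sub_eq_zero]
  exact (congrFun hrow j).symm

end

/-- The matrix identity `Q Φ₀ P = I*_p` underlying the canonical
representation of the CKSVAR (Proposition 1). -/
theorem cksvar_canonical_identity (φyyp φyym : ℝ) (φyx φxyp φxym : n → ℝ)
    (Φxx : Matrix n n ℝ) (hΦxx : IsUnit Φxx.det)
    (hbarp : φyyp - φyx ⬝ᵥ Φxx⁻¹ *ᵥ φxyp ≠ 0)
    (hbarm : φyym - φyx ⬝ᵥ Φxx⁻¹ *ᵥ φxym ≠ 0) :
    cksvarQ φyx Φxx * cksvarPhi0 φyyp φyym φyx φxyp φxym Φxx *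
        (cksvarPinv φyyp φyym φyx φxyp φxym Φxx)⁻¹ = cksvarIstar := by
  have hPinv : IsUnit (cksvarPinv φyyp φyym φyx φxyp φxym Φxx).det := by
    rw [det_cksvarPinv, isUnit_iff_ne_zero]
    exact mul_ne_zero hbarp (mul_ne_zero hbarm hΦxx.ne_zero)
  rw [cksvarQ_mul_cksvarPhi0 _ _ _ _ _ _ hΦxx, ← cksvarIstar_mul_cksvarPinv, Matrix.mul_assoc,
    mul_nonsing_inv _ hPinv, Matrix.mul_one]
end
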